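/- Let c be a real number with 0 < c < (e² − 1)/(e² + 1). If p is analytic on 𝔻 and p ≺ (1 + cz)^{1/2} (principal square root), then p ≺ 𝔅. (In class language: 𝒮*(q_c) ⊂ 𝒮*_𝔅 for 0 < c < (e²−1)/(e²+1), where q_c(z) = √(1+cz) is associated with the Cassinian ovals.) -/

import Mathlib

open Complex Metric

/-!
The function `q_c(z) = √(1 + cz)` is itself subordinate to `𝔅`: since `tanh (artanh w) = w`, we have
`q_c = 𝔅 ∘ ω` with `ω(z) = artanh (cz)`. Comparing the odd Taylor series of `artanh` termwise gives
`|artanh w| ≤ artanh |w|`, hence `|ω(z)| < artanh c < artanh (tanh 1) = 1`, because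
`(e² − 1)/(e² + 1) = tanh 1`. The theorem follows since subordination is transitive.
-/

/-- The bean function 𝔅(z) = (1 + tanh z)^(1/2), principal branch of the complex power. -/
noncomputable def Bean (z : ℂ) : ℂ := (1 + Complex.tanh z) ^ ((1:ℂ)/2)

def unitDisk : Set ℂ := Metric.ball (0:ℂ) 1

def Subord (p g : ℂ → ℂ) : Prop :=
  ∃ ω : ℂ → ℂ, AnalyticOnNhd ℂ ω unitDisk ∧ ω 0 = 0 ∧
    (∀ z ∈ unitDisk, ‖ω z‖ < 1) ∧ ∀ z ∈ unitDisk, p z = g (ω z)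

namespace Complex

noncomputable def artanh (w : ℂ) : ℂ := (1 / 2) * (log (1 + w) - log (1 - w))

@[simp]
theorem artanh_zero : artanh 0 = 0 := by simp [artanh]

theorem tanh_artanh {w : ℂ} (h₁ : 1 + w ≠ 0) (h₂ : 1 - w ≠ 0) : tanh (artanh w) = w := by
  have hsq : exp (artanh w) ^ 2 * (1 - w) = 1 + w := by
    have h2w : ((2 : ℕ) : ℂ) * artanh w = log (1 + w) - log (1 - w) := by
      rw [artanh]; push_cast; ring
    rw [← exp_nat_mul, h2w, exp_sub, exp_log h₁, exp_log h₂, div_mul_cancel₀ _ h₂]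
  have hden : exp (artanh w) ^ 2 + 1 ≠ 0 := fun h ↦
    two_ne_zero (α := ℂ) (by linear_combination (1 - w) * h - hsq)
  rw [tanh_eq_sinh_div_cosh, sinh, cosh, exp_neg, div_div_div_cancel_right₀ two_ne_zero,
    div_eq_iff (by field_simp; exact div_ne_zero hden (exp_ne_zero _))]
  field_simp
  linear_combination hsq

theorem one_sub_mem_slitPlane_of_norm_lt_one {w : ℂ} (hw : ‖w‖ < 1) : 1 - w ∈ slitPlane := by
  simpa [sub_eq_add_neg] using mem_slitPlane_of_norm_lt_one (z := -w) (by rwa [norm_neg])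

theorem analyticAt_artanh {w : ℂ} (hw : ‖w‖ < 1) : AnalyticAt ℂ artanh w := by
  have h₁ := mem_slitPlane_of_norm_lt_one hw
  have h₂ := one_sub_mem_slitPlane_of_norm_lt_one hw
  unfold artanh
  fun_prop (disch := assumption)

theorem hasSum_log_sub_log {z : ℂ} (hz : ‖z‖ < 1) :
    HasSum (fun n : ℕ ↦ ((-1) ^ (n + 1) + 1) * z ^ n / n) (log (1 + z) - log (1 - z)) := by
  simpa [add_mul, add_div, sub_eq_add_neg] using
    (hasSum_taylorSeries_log hz).add (hasSum_taylorSeries_neg_log hz)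

theorem norm_artanh_le {w : ℂ} (hw : ‖w‖ < 1) : ‖artanh w‖ ≤ Real.artanh ‖w‖ := by
  set r := ‖w‖
  have hr₀ : 0 ≤ r := norm_nonneg w
  have hreal : HasSum (fun n : ℕ ↦ ((-1) ^ (n + 1) + 1) * r ^ n / n)
      (Real.log (1 + r) - Real.log (1 - r)) := by
    rw [← hasSum_ofReal]
    convert hasSum_log_sub_log (z := (r : ℂ)) (by simpa [abs_of_nonneg hr₀]) using 1
    · ext n; push_cast; rfl
    · push_cast [ofReal_log (by linarith : 0 ≤ 1 + r), ofReal_log (by linarith : 0 ≤ 1 - r)]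
      rfl
  have hterm (n : ℕ) : ‖((-1) ^ (n + 1) + 1) * w ^ n / n‖ = ((-1) ^ (n + 1) + 1) * r ^ n / n := by
    have hcoeff : (0 : ℝ) ≤ (-1) ^ (n + 1) + 1 := by
      rcases neg_one_pow_eq_or ℝ (n + 1) with h | h <;> rw [h] <;> norm_num
    rw [show ((-1 : ℂ) ^ (n + 1) + 1) = (((-1 : ℝ) ^ (n + 1) + 1 : ℝ) : ℂ) by push_cast; rfl,
      norm_div, norm_mul, norm_real, Real.norm_of_nonneg hcoeff, norm_pow, norm_natCast]
  calc ‖artanh w‖ = 1 / 2 * ‖log (1 + w) - log (1 - w)‖ := by simp [artanh]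
    _ ≤ 1 / 2 * (Real.log (1 + r) - Real.log (1 - r)) := by
      gcongr
      exact (hasSum_log_sub_log hw).norm_le_of_bounded hreal fun n ↦ (hterm n).le
    _ = Real.artanh r := by
      rw [Real.artanh_eq_half_log ⟨by linarith, hw.le⟩, Real.log_div (by linarith) (by linarith)]

end Complex

theorem Subord.trans {p g f : ℂ → ℂ} (hpg : Subord p g) (hgf : Subord g f) : Subord p f := by
  obtain ⟨ω₁, hω₁, hω₁0, hω₁1, hp⟩ := hpg
  obtain ⟨ω₂, hω₂, hω₂0, hω₂1, hg⟩ := hgf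
  have hmaps (z : ℂ) (hz : z ∈ unitDisk) : ω₁ z ∈ unitDisk := mem_ball_zero_iff.mpr (hω₁1 z hz)
  refine ⟨ω₂ ∘ ω₁, fun z hz ↦ (hω₂ _ (hmaps z hz)).comp (hω₁ z hz), by simp [hω₁0, hω₂0],
    fun z hz ↦ hω₂1 _ (hmaps z hz), fun z hz ↦ ?_⟩
  rw [hp z hz, hg _ (hmaps z hz), Function.comp_apply]

theorem Real.tanh_one : Real.tanh 1 = (Real.exp 1 ^ 2 - 1) / (Real.exp 1 ^ 2 + 1) := by
  rw [Real.tanh_eq, Real.exp_neg]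
  field_simp

theorem sqrt_one_add_mul_subord_bean {c : ℂ} (hc : ‖c‖ < Real.tanh 1) :
    Subord (fun z ↦ (1 + c * z) ^ ((1 : ℂ) / 2)) Bean := by
  have hc1 : ‖c‖ < 1 := hc.trans (Real.tanh_lt_one 1)
  have hcz {z : ℂ} (hz : z ∈ unitDisk) : ‖c * z‖ ≤ ‖c‖ := by
    rw [norm_mul]
    exact mul_le_of_le_one_right (norm_nonneg c) (mem_ball_zero_iff.mp hz).le
  refine ⟨fun z ↦ artanh (c * z), fun z hz ↦ ?_, by simp, fun z hz ↦ ?_, fun z hz ↦ ?_⟩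
  · exact (analyticAt_artanh ((hcz hz).trans_lt hc1)).comp (analyticAt_const.mul analyticAt_id)
  · calc ‖artanh (c * z)‖ ≤ Real.artanh ‖c * z‖ := norm_artanh_le ((hcz hz).trans_lt hc1)
      _ ≤ Real.artanh ‖c‖ := Real.artanh_le_artanh (by linarith [norm_nonneg (c * z)]) hc1 (hcz hz)
      _ < Real.artanh (Real.tanh 1) :=
        Real.artanh_lt_artanh (by linarith [norm_nonneg c]) (Real.tanh_lt_one 1) hc
      _ = 1 := Real.artanh_tanh 1
  · have hw : ‖c * z‖ < 1 := (hcz hz).trans_lt hc1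
    rw [Bean, tanh_artanh (slitPlane_ne_zero (mem_slitPlane_of_norm_lt_one hw))
      (slitPlane_ne_zero (one_sub_mem_slitPlane_of_norm_lt_one hw))]

theorem cassinianSubsetBean_general (c : ℝ) (hc0 : 0 < c)
    (hc1 : c < (Real.exp 1 ^ 2 - 1) / (Real.exp 1 ^ 2 + 1))
    (p : ℂ → ℂ)
    (hsub : Subord p (fun z => (1 + (c:ℂ)*z) ^ ((1:ℂ)/2))) :
    Subord p Bean :=
  hsub.trans <| sqrt_one_add_mul_subord_bean <| by
    rwa [norm_real, Real.norm_of_nonneg hc0.le, Real.tanh_one]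

/-- 𝒮*(q_c) ⊂ 𝒮*_𝔅 for 0 < c < (e²−1)/(e²+1). -/
theorem cassinianSubsetBean (c : ℝ) (hc0 : 0 < c)
    (hc1 : c < (Real.exp 1 ^ 2 - 1) / (Real.exp 1 ^ 2 + 1))
    (p : ℂ → ℂ) (hp : AnalyticOnNhd ℂ p unitDisk)
    (hsub : Subord p (fun z => (1 + (c:ℂ)*z) ^ ((1:ℂ)/2))) :
    Subord p Bean :=
  cassinianSubsetBean_general c hc0 hc1 p hsub
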